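/- Let T = [T_1,...,T_r] be a regular triangular set in K[x_1,...,x_n] with lv(T_r) < x_n, and let P = P_d x_m^d + ... + P_1 x_m + P_0 where lv(P) = x_m > lv(T_r), deg(P, x_m) = d, and each P_i ∈ K[x_1,...,x_{m−1}]. Then prem(P, T) = 0 if and only if prem(P_i, T) = 0 for all i = 0, 1, ..., d. -/

import Mathlib

open MvPolynomial

namespace CharDec

variable {K : Type*} [Field K] {σ : Type*} [LinearOrder σ]

/-- Lexicographic comparison of exponent vectors (larger variables dominate):
`a ≤ b` iff `a = b` or at the greatest index where they differ, `a` is smaller. -/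
def lexLe (a b : σ →₀ ℕ) : Prop :=
  a = b ∨ ∃ i : σ, a i < b i ∧ ∀ j : σ, i < j → a j = b j

/-- `m` is the leading monomial of `f` with respect to the lex term ordering. -/
def IsLeadMon (f : MvPolynomial σ K) (m : σ →₀ ℕ) : Prop :=
  m ∈ f.support ∧ ∀ m' ∈ f.support, lexLe m' m

/-- `f` has leading (greatest actually occurring) variable `i`. -/
def HasLV (f : MvPolynomial σ K) (i : σ) : Prop :=
  i ∈ f.vars ∧ ∀ j ∈ f.vars, j ≤ i

/-- The coefficient of `(X i) ^ d` in `f`, as a polynomial in the remaining variables. -/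
noncomputable def coeffWrt (i : σ) (d : ℕ) (f : MvPolynomial σ K) :
    MvPolynomial σ K :=
  ∑ m ∈ f.support.filter (fun m => m i = d), monomial (m.update i 0) (f.coeff m)

/-- The initial (leading coefficient in the leading variable) of `f` with
respect to the variable `i`. -/
noncomputable def initialWrt (i : σ) (f : MvPolynomial σ K) : MvPolynomial σ K :=
  coeffWrt i (f.degreeOf i) f

/-- `R` is the pseudo-remainder of `P` on pseudo-division by `Q` with respect
to the variable `y` (classical pseudo-division, with the exponent
`deg P - deg Q + 1` when `deg P ≥ deg Q`, and `0` otherwise). -/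
def IsPrem (y : σ) (Q P R : MvPolynomial σ K) : Prop :=
  ∃ A : MvPolynomial σ K,
    (initialWrt y Q) ^ (P.degreeOf y + 1 - Q.degreeOf y) * P = A * Q + R ∧
    R.degreeOf y < Q.degreeOf y

/-- `IterPrem P L R` : `R` is the iterated pseudo-remainder of `P` by the
list `L` of pairs (leading variable, divisor), divisors being used from the
head of the list on. -/
def IterPrem : MvPolynomial σ K → List (σ × MvPolynomial σ K) →
    MvPolynomial σ K → Prop
  | P, [], R => R = P
  | P, e :: L, R => ∃ S, IsPrem e.1 e.2 P S ∧ IterPrem S L R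

/-- A triangular set: a list of (leading variable, polynomial) pairs with
strictly increasing leading variables. -/
structure TriSet (K : Type*) [Field K] (σ : Type*) [LinearOrder σ] where
  elems : List (σ × MvPolynomial σ K)
  sorted : elems.Pairwise (fun e e' => e.1 < e'.1)
  hlv : ∀ e ∈ elems, HasLV e.2 e.1

namespace TriSet

/-- The list of leading variables of a triangular set. -/
def lvs (T : TriSet K σ) : List σ := T.elems.map Prod.fst

/-- The list of polynomials of a triangular set. -/
def polys (T : TriSet K σ) : List (MvPolynomial σ K) := T.elems.map Prod.snd

/-- A variable is a parameter of `T` if it is not a leading variable of `T`. -/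
def IsParam (T : TriSet K σ) (j : σ) : Prop := j ∉ T.lvs

/-- `T` is normal: every initial involves only the parameters of `T`. -/
def Normal (T : TriSet K σ) : Prop :=
  ∀ e ∈ T.elems, ∀ j ∈ (initialWrt e.1 e.2).vars, T.IsParam j

/-- `T` is zero-dimensional: every variable is a leading variable of `T`. -/
def ZeroDim (T : TriSet K σ) : Prop := ∀ i : σ, i ∈ T.lvs

/-- The product of the initials of `T`. -/
noncomputable def prodInit (T : TriSet K σ) : MvPolynomial σ K :=
  (T.elems.map fun e => initialWrt e.1 e.2).prod

/-- The ideal generated by the polynomials of `T`. -/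
noncomputable def ideal (T : TriSet K σ) : Ideal (MvPolynomial σ K) :=
  Ideal.span {p | ∃ e ∈ T.elems, p = e.2}

end TriSet

/-- The saturation `I : J^∞` of an ideal `I` by an element `J`. -/
def satBy (I : Ideal (MvPolynomial σ K)) (J : MvPolynomial σ K) :
    Ideal (MvPolynomial σ K) where
  carrier := {p | ∃ k : ℕ, J ^ k * p ∈ I}
  zero_mem' := ⟨0, by simp⟩
  add_mem' := by
    rintro a b ⟨k, hk⟩ ⟨l, hl⟩
    refine ⟨k + l, ?_⟩
    have h : J ^ (k + l) * (a + b) = J ^ l * (J ^ k * a) + J ^ k * (J ^ l * b) := by ring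
    rw [h]
    exact add_mem (Ideal.mul_mem_left _ _ hk) (Ideal.mul_mem_left _ _ hl)
  smul_mem' := by
    rintro c a ⟨k, hk⟩
    refine ⟨k, ?_⟩
    have h : J ^ k * (c • a) = c * (J ^ k * a) := by rw [smul_eq_mul]; ring
    rw [h]
    exact Ideal.mul_mem_left _ _ hk

namespace TriSet

/-- The saturated ideal `sat(T) = ⟨T⟩ : (∏ initials)^∞` of a triangular set. -/
noncomputable def sat (T : TriSet K σ) : Ideal (MvPolynomial σ K) :=
  satBy T.ideal T.prodInit

/-- The triangular set formed by the first `i` elements of `T`. -/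
def take (T : TriSet K σ) (i : ℕ) : TriSet K σ :=
  ⟨T.elems.take i, T.sorted.sublist (List.take_sublist i T.elems),
    fun e he => T.hlv e (List.mem_of_mem_take he)⟩

/-- `T` is a regular set: each initial is neither zero nor a zero-divisor
modulo the saturated ideal of the preceding subset. -/
def Regular (T : TriSet K σ) : Prop :=
  ∀ i : ℕ, ∀ h : i < T.elems.length,
    initialWrt (T.elems.get ⟨i, h⟩).1 (T.elems.get ⟨i, h⟩).2 ∉ (T.take i).sat ∧
    ∀ p : MvPolynomial σ K,
      initialWrt (T.elems.get ⟨i, h⟩).1 (T.elems.get ⟨i, h⟩).2 * p ∈ (T.take i).sat →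
        p ∈ (T.take i).sat

end TriSet

/-- The zero set, in (the algebraic closure of `K`)^σ, of a set of polynomials. -/
def zeroSet (S : Set (MvPolynomial σ K)) : Set (σ → AlgebraicClosure K) :=
  {x | ∀ p ∈ S, aeval x p = 0}

/-- `Zero(T / ini(T))` : the common zeros of `T` at which no initial of `T` vanishes. -/
def TriSet.zeroQuasi (T : TriSet K σ) : Set (σ → AlgebraicClosure K) :=
  {x | (∀ e ∈ T.elems, aeval x e.2 = 0) ∧
       (∀ e ∈ T.elems, aeval x (initialWrt e.1 e.2) ≠ 0)}

/-- `G` is a (finite) Gröbner basis of `I` with respect to the lex term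
ordering: `G ⊆ I` and the leading monomial of every nonzero element of `I` is
divisible by the leading monomial of some element of `G`. -/
def IsGB (G : Set (MvPolynomial σ K)) (I : Ideal (MvPolynomial σ K)) : Prop :=
  G.Finite ∧ G ⊆ ↑I ∧
  ∀ f ∈ I, f ≠ 0 → ∃ g ∈ G, ∃ mf mg, IsLeadMon f mf ∧ IsLeadMon g mg ∧ ∀ j, mg j ≤ mf j

/-- `G` is the reduced lex Gröbner basis of `I`. -/
def IsReducedGB (G : Set (MvPolynomial σ K)) (I : Ideal (MvPolynomial σ K)) : Prop :=
  IsGB G I ∧ (0 : MvPolynomial σ K) ∉ G ∧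
  (∀ g ∈ G, ∀ m, IsLeadMon g m → g.coeff m = 1) ∧
  (∀ g ∈ G, ∀ g' ∈ G, g' ≠ g → ∀ m ∈ g.support, ∀ m', IsLeadMon g' m' →
    ¬ (∀ j, m' j ≤ m j))

/-- `C` is the W-characteristic set extracted from the (reduced lex Gröbner
basis) `G`: for each leading variable occurring in `G`, `C` contains the
lex-minimal element of `G` with that leading variable. -/
def IsWCharOf (C : TriSet K σ) (G : Set (MvPolynomial σ K)) : Prop :=
  (∀ e ∈ C.elems, e.2 ∈ G ∧
    ∀ g ∈ G, HasLV g e.1 → ∀ mg me, IsLeadMon g mg → IsLeadMon e.2 me → lexLe me mg) ∧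
  (∀ g ∈ G, ∀ i : σ, HasLV g i → i ∈ C.lvs)

/-- The Sylvester-style matrix of two univariate polynomials. -/
noncomputable def sylvester {R : Type*} [CommRing R] (f g : Polynomial R) :
    Matrix (Fin (f.natDegree + g.natDegree)) (Fin (f.natDegree + g.natDegree)) R :=
  Matrix.of fun i j =>
    if (i : ℕ) < g.natDegree then
      (if (i : ℕ) ≤ (j : ℕ) then f.coeff ((j : ℕ) - (i : ℕ)) else 0)
    else
      (if (i : ℕ) - g.natDegree ≤ (j : ℕ) then g.coeff ((j : ℕ) - ((i : ℕ) - g.natDegree))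
       else 0)

/-- The resultant of two univariate polynomials, as the determinant of their
Sylvester matrix. -/
noncomputable def resultantP {R : Type*} [CommRing R] (f g : Polynomial R) : R :=
  (sylvester f g).det

/-- View a multivariate polynomial as a univariate polynomial in the variable `i`. -/
noncomputable def toUni (i : σ) (f : MvPolynomial σ K) :
    Polynomial (MvPolynomial σ K) :=
  aeval (fun j => if j = i then Polynomial.X else Polynomial.C (X j)) f

/-- The resultant of two multivariate polynomials with respect to the variable `i`. -/
noncomputable def resWrt (i : σ) (f g : MvPolynomial σ K) : MvPolynomial σ K :=
  resultantP (toUni i f) (toUni i g)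

/-- The iterated resultant of `f` with respect to a list of
(leading variable, divisor) pairs, used from the head of the list on. -/
noncomputable def iterRes : MvPolynomial σ K → List (σ × MvPolynomial σ K) →
    MvPolynomial σ K
  | f, [] => f
  | f, e :: L => iterRes (resWrt e.1 f e.2) L

end CharDec

/-!
For a regular triangular set `T`, `prem(F, T) = 0` holds exactly when `F ∈ sat(T)`. This goes by
induction on the length of `T`: write `T = T' ++ [Q]` with `lv(Q) = y`. The pseudo-remainder
`R = prem(F, Q)` lies in `sat(T)` and has `y`-degree below `deg_y Q`, so `c * R = E + B * Q` with
`c` a product of initials and `E ∈ ⟨T'⟩`. Viewed as polynomials in `y` over the quotient by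
`sat(T')`, `B * Q` then has degree below `deg_y Q` although the leading coefficient of `Q` is a
non-zero-divisor there, so `B ≡ 0`, and then `R ∈ sat(T')` since `c` is a non-zero-divisor too.

The variable `x_m` occurs neither in the polynomials of `T` nor in their initials, so `sat(T)` is
stable under taking coefficients with respect to `x_m`: a polynomial lies in `sat(T)` iff each of
its coefficients `P_i` does.
-/

namespace CharDec

open scoped nonZeroDivisors

theorem natDegree_C_leadingCoeff_mul_sub_lt {R : Type*} [CommRing R] {p q : Polynomial R}
    (hp : 0 < p.natDegree) (hqp : q.natDegree ≤ p.natDegree) :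
    (Polynomial.C q.leadingCoeff * p -
      Polynomial.C p.leadingCoeff * Polynomial.X ^ (p.natDegree - q.natDegree) * q).natDegree
      < p.natDegree := by
  have hle : (Polynomial.C q.leadingCoeff * p -
      Polynomial.C p.leadingCoeff * Polynomial.X ^ (p.natDegree - q.natDegree) * q).natDegree
      ≤ p.natDegree := by
    have := Polynomial.natDegree_C_mul_X_pow_le p.leadingCoeff (p.natDegree - q.natDegree)
    refine (Polynomial.natDegree_sub_le_of_le (Polynomial.natDegree_C_mul_le q.leadingCoeff p)
      (Polynomial.natDegree_mul_le.trans (Nat.add_le_add_right this _))).trans ?_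
    omega
  have := Polynomial.natDegree_le_pred (n := p.natDegree) hle (by
    rw [Polynomial.coeff_sub, Polynomial.coeff_C_mul, mul_assoc, Polynomial.coeff_C_mul,
      Polynomial.coeff_X_pow_mul', if_pos (by omega), Nat.sub_sub_self hqp,
      Polynomial.leadingCoeff, Polynomial.leadingCoeff, mul_comm, sub_self])
  omega

theorem quotientMk_mem_nonZeroDivisors_iff {S : Type*} [CommRing S] {J : Ideal S} {a : S} :
    Ideal.Quotient.mk J a ∈ (S ⧸ J)⁰ ↔ ∀ p, a * p ∈ J → p ∈ J := by
  rw [mem_nonZeroDivisors_iff_left]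
  constructor
  · intro h p hp
    rw [← Ideal.Quotient.eq_zero_iff_mem] at hp ⊢
    exact h _ (by rwa [← map_mul])
  · intro h x hx
    obtain ⟨p, rfl⟩ := Ideal.Quotient.mk_surjective x
    rw [← map_mul, Ideal.Quotient.eq_zero_iff_mem] at hx
    exact Ideal.Quotient.eq_zero_iff_mem.mpr (h p hx)

theorem map_quotientMk_eq_zero_iff {S : Type*} [CommRing S] {J : Ideal S} {p : Polynomial S} :
    p.map (Ideal.Quotient.mk J) = 0 ↔ ∀ d, p.coeff d ∈ J := by
  simp [Polynomial.ext_iff, Ideal.Quotient.eq_zero_iff_mem]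

theorem eq_zero_of_natDegree_mul_lt {R : Type*} [CommRing R] {p q : Polynomial R}
    (hq : q.leadingCoeff ∈ R⁰) (h : (p * q).natDegree < q.natDegree) : p = 0 := by
  by_contra hp
  have hlc : p.leadingCoeff * q.leadingCoeff ≠ 0 := by
    rw [Ne, mul_right_mem_nonZeroDivisors_eq_zero_iff hq]
    exact Polynomial.leadingCoeff_ne_zero.mpr hp
  rw [Polynomial.natDegree_mul' hlc] at h
  omega

variable {K : Type*} [Field K] {σ : Type*}

theorem coeff_coeffWrt (i : σ) (d : ℕ) (f : MvPolynomial σ K) (ν : σ →₀ ℕ) :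
    (coeffWrt i d f).coeff ν = if ν i = 0 then f.coeff (ν.update i d) else 0 := by
  classical
  simp only [coeffWrt, coeff_sum, coeff_monomial]
  split_ifs with hν
  · rw [Finset.sum_eq_single (ν.update i d)]
    · simp [← hν]
    · intro μ hμ hne
      obtain ⟨-, rfl⟩ := Finset.mem_filter.mp hμ
      rw [if_neg]
      rintro rfl
      simp at hne
    · intro hμ
      simp_all
  · refine Finset.sum_eq_zero fun μ _ => if_neg ?_
    rintro rfl
    simp at hν

theorem notMem_vars_coeffWrt (i : σ) (d : ℕ) (f : MvPolynomial σ K) :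
    i ∉ (coeffWrt i d f).vars := by
  classical
  intro hi
  obtain ⟨ν, hν, hνi⟩ := (mem_vars_iff_mem_support i).mp hi
  rw [mem_support_iff, coeff_coeffWrt] at hν
  split_ifs at hν with h
  · exact Finsupp.mem_support_iff.mp hνi h
  · exact hν rfl

theorem notMem_vars_initialWrt (i : σ) (f : MvPolynomial σ K) :
    i ∉ (initialWrt i f).vars :=
  notMem_vars_coeffWrt _ _ _

theorem vars_coeffWrt_subset (i : σ) (d : ℕ) (f : MvPolynomial σ K) :
    (coeffWrt i d f).vars ⊆ f.vars := by
  classical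
  intro j hj
  obtain ⟨ν, hν, hνj⟩ := (mem_vars_iff_mem_support j).mp hj
  rw [mem_support_iff, coeff_coeffWrt] at hν
  split_ifs at hν with h
  · refine (mem_vars_iff_mem_support j).mpr ⟨ν.update i d, mem_support_iff.mpr hν, ?_⟩
    have hji : j ≠ i := by rintro rfl; exact Finsupp.mem_support_iff.mp hνj h
    simpa [Finsupp.update_apply, hji] using hνj
  · exact absurd rfl hν

theorem coeffWrt_eq_zero_of_degreeOf_lt {i : σ} {d : ℕ} {f : MvPolynomial σ K}
    (h : f.degreeOf i < d) : coeffWrt i d f = 0 := by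
  rw [coeffWrt, Finset.filter_false_of_mem, Finset.sum_empty]
  intro μ hμ hd
  have := monomial_le_degreeOf i hμ
  omega

theorem degreeOf_mul_le_of_notMem_vars {v : σ} {c : MvPolynomial σ K} (hc : v ∉ c.vars)
    (f : MvPolynomial σ K) : (c * f).degreeOf v ≤ f.degreeOf v := by
  have h0 : c.degreeOf v = 0 := by simpa [mem_vars_iff_degreeOf_ne_zero] using hc
  simpa [h0] using degreeOf_mul_le v c f

section satBy

variable {I I' : Ideal (MvPolynomial σ K)} {J J' c f : MvPolynomial σ K}

theorem le_satBy : I ≤ satBy I J :=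
  fun _ hp => ⟨0, by rwa [pow_zero, one_mul]⟩

theorem satBy_mono (hI : I ≤ I') (hJ : J ∣ J') : satBy I J ≤ satBy I' J' := by
  rintro f ⟨k, hk⟩
  obtain ⟨d, rfl⟩ := hJ
  exact ⟨k, hI (by simpa [mul_pow, mul_assoc, mul_left_comm] using I.mul_mem_left (d ^ k) hk)⟩

theorem mem_satBy_of_pow_mul_mem (hc : c ∣ J) {k : ℕ} (h : c ^ k * f ∈ satBy I J) :
    f ∈ satBy I J := by
  obtain ⟨l, hl⟩ := h
  obtain ⟨d, rfl⟩ := hc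
  refine ⟨l + k, ?_⟩
  have := I.mul_mem_left (d ^ k) hl
  rwa [show d ^ k * ((c * d) ^ l * (c ^ k * f)) = (c * d) ^ (l + k) * f by ring] at this

end satBy

variable [LinearOrder σ]

theorem toUni_mul (i : σ) (f g : MvPolynomial σ K) :
    toUni i (f * g) = toUni i f * toUni i g := map_mul (aeval _) f g

theorem toUni_sub (i : σ) (f g : MvPolynomial σ K) :
    toUni i (f - g) = toUni i f - toUni i g := map_sub (aeval _) f g

theorem toUni_add (i : σ) (f g : MvPolynomial σ K) :
    toUni i (f + g) = toUni i f + toUni i g := map_add (aeval _) f g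

theorem toUni_pow (i : σ) (f : MvPolynomial σ K) (k : ℕ) :
    toUni i (f ^ k) = toUni i f ^ k := map_pow (aeval _) f k

theorem toUni_X_self (i : σ) : toUni i (X i : MvPolynomial σ K) = Polynomial.X := by
  simp [toUni]

theorem toUni_eq_C_of_notMem_vars {i : σ} {f : MvPolynomial σ K} (h : i ∉ f.vars) :
    toUni i f = Polynomial.C f := by
  refine hom_congr_vars (f₁ := (aeval _).toRingHom) (f₂ := Polynomial.C) ?_ ?_ rfl
  · ext; simp
  · intro j hj _
    simp [ne_of_mem_of_not_mem hj h]

theorem toUni_monomial (i : σ) (μ : σ →₀ ℕ) (c : K) :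
    toUni i (monomial μ c) = Polynomial.C (monomial (μ.update i 0) c) * Polynomial.X ^ μ i := by
  classical
  have hsplit : monomial μ c = X i ^ μ i * monomial (μ.update i 0) c := by
    rw [X_pow_eq_monomial, monomial_mul, one_mul, ← Finsupp.erase_eq_update_zero,
      Finsupp.single_add_erase]
  have hfree : i ∉ (monomial (μ.update i 0) c).vars := by
    by_cases hc : c = 0
    · simp [hc]
    · simp [vars_monomial hc]
  rw [hsplit, toUni_mul, toUni_pow, toUni_X_self, toUni_eq_C_of_notMem_vars hfree, mul_comm]

theorem coeff_toUni (i : σ) (f : MvPolynomial σ K) (d : ℕ) :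
    (toUni i f).coeff d = coeffWrt i d f := by
  classical
  conv_lhs => rw [f.as_sum, toUni, map_sum]
  simp only [← toUni.eq_def, toUni_monomial, Polynomial.finsetSum_coeff,
    Polynomial.coeff_C_mul_X_pow]
  rw [coeffWrt, Finset.sum_filter]
  exact Finset.sum_congr rfl fun μ _ => if_congr eq_comm rfl rfl

theorem natDegree_toUni (i : σ) (f : MvPolynomial σ K) :
    (toUni i f).natDegree = f.degreeOf i := by
  classical
  apply le_antisymm
  · rw [Polynomial.natDegree_le_iff_coeff_eq_zero]
    intro N hN
    rw [coeff_toUni, coeffWrt_eq_zero_of_degreeOf_lt hN]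
  · rw [degreeOf_le_iff]
    intro μ hμ
    refine Polynomial.le_natDegree_of_ne_zero fun h0 => mem_support_iff.mp hμ ?_
    have := congrArg (coeff (μ.update i 0)) ((coeff_toUni i f (μ i)).symm.trans h0)
    simpa [coeff_coeffWrt] using this

theorem leadingCoeff_toUni (i : σ) (f : MvPolynomial σ K) :
    (toUni i f).leadingCoeff = initialWrt i f := by
  rw [Polynomial.leadingCoeff, natDegree_toUni, coeff_toUni, initialWrt]

theorem eval_X_toUni (i : σ) (f : MvPolynomial σ K) : (toUni i f).eval (X i) = f := by
  induction f using MvPolynomial.induction_on with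
  | C a => simp [toUni]
  | add p q hp hq => simp [toUni_add, hp, hq]
  | mul_X p j hp => by_cases h : j = i <;> simp [toUni, h] at hp ⊢ <;> simp [hp]

theorem mem_of_forall_coeff_toUni_mem {I : Ideal (MvPolynomial σ K)} (i : σ)
    {f : MvPolynomial σ K} (h : ∀ d, (toUni i f).coeff d ∈ I) : f ∈ I := by
  rw [← eval_X_toUni i f, Polynomial.eval_eq_sum, Polynomial.sum]
  exact I.sum_mem fun d _ => I.mul_mem_right _ (h d)

theorem degreeOf_initialWrt_mul_sub_lt {y : σ} {P Q : MvPolynomial σ K} (hQ : 0 < Q.degreeOf y)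
    (hQP : Q.degreeOf y ≤ P.degreeOf y) :
    (initialWrt y Q * P - initialWrt y P * X y ^ (P.degreeOf y - Q.degreeOf y) * Q).degreeOf y
      < P.degreeOf y := by
  have key := natDegree_C_leadingCoeff_mul_sub_lt (p := toUni y P) (q := toUni y Q)
    (by rw [natDegree_toUni]; omega) (by rwa [natDegree_toUni, natDegree_toUni])
  rw [leadingCoeff_toUni, leadingCoeff_toUni, natDegree_toUni, natDegree_toUni] at key
  rwa [← natDegree_toUni, toUni_sub, toUni_mul, toUni_mul, toUni_mul, toUni_pow, toUni_X_self,
    toUni_eq_C_of_notMem_vars (notMem_vars_initialWrt _ _),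
    toUni_eq_C_of_notMem_vars (notMem_vars_initialWrt _ _)]

/- Allowing every exponent `k` above the classical one lets the induction reuse the remainder of
the reduced polynomial unchanged. -/
theorem exists_pow_mul_eq_mul_add {y : σ} {Q : MvPolynomial σ K} (hQ : 0 < Q.degreeOf y)
    (P : MvPolynomial σ K) (k : ℕ) (hk : P.degreeOf y + 1 - Q.degreeOf y ≤ k) :
    ∃ A R, initialWrt y Q ^ k * P = A * Q + R ∧ R.degreeOf y < Q.degreeOf y := by
  induction hD : P.degreeOf y using Nat.strong_induction_on generalizing P k with
  | _ D ih =>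
    subst hD
    by_cases hPQ : P.degreeOf y < Q.degreeOf y
    · refine ⟨0, initialWrt y Q ^ k * P, by ring, ?_⟩
      exact (degreeOf_mul_le_of_notMem_vars
        (fun h => notMem_vars_initialWrt _ _ (vars_pow _ _ h)) P).trans_lt hPQ
    · set s := P.degreeOf y - Q.degreeOf y
      set P₁ := initialWrt y Q * P - initialWrt y P * X y ^ s * Q
      have hdrop : P₁.degreeOf y < P.degreeOf y := degreeOf_initialWrt_mul_sub_lt hQ (by omega)
      obtain ⟨A₁, R, hEq, hR⟩ := ih _ hdrop P₁ (k - 1) (by omega) rfl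
      refine ⟨A₁ + initialWrt y Q ^ (k - 1) * initialWrt y P * X y ^ s, R, ?_, hR⟩
      calc initialWrt y Q ^ k * P = initialWrt y Q ^ (k - 1) * (initialWrt y Q * P) := by
            rw [← mul_assoc, ← pow_succ, Nat.sub_add_cancel (by omega)]
        _ = initialWrt y Q ^ (k - 1) * P₁
            + initialWrt y Q ^ (k - 1) * initialWrt y P * X y ^ s * Q := by ring
        _ = _ := by rw [hEq]; ring

theorem exists_isPrem (y : σ) {Q : MvPolynomial σ K} (hQ : 0 < Q.degreeOf y)
    (P : MvPolynomial σ K) : ∃ R, IsPrem y Q P R := by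
  obtain ⟨A, R, hEq, hR⟩ := exists_pow_mul_eq_mul_add hQ P _ le_rfl
  exact ⟨R, A, hEq, hR⟩

section coefficients

variable {v : σ}

theorem coeff_toUni_mem_span {s : Set (MvPolynomial σ K)} (hs : ∀ p ∈ s, v ∉ p.vars)
    {u : MvPolynomial σ K} (hu : u ∈ Ideal.span s) (d : ℕ) :
    (toUni v u).coeff d ∈ Ideal.span s := by
  induction hu using Submodule.span_induction generalizing d with
  | mem x hx =>
    rw [toUni_eq_C_of_notMem_vars (hs x hx), Polynomial.coeff_C]
    split_ifs
    exacts [Ideal.subset_span hx, zero_mem _]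
  | zero => simp [toUni]
  | add x y _ _ hx hy => rw [toUni_add, Polynomial.coeff_add]; exact add_mem (hx d) (hy d)
  | smul a x _ hx =>
    rw [smul_eq_mul, toUni_mul, Polynomial.coeff_mul]
    exact Ideal.sum_mem _ fun ij _ => Ideal.mul_mem_left _ _ (hx ij.2)

theorem coeff_toUni_mem_satBy {I : Ideal (MvPolynomial σ K)} {J : MvPolynomial σ K}
    (hI : ∀ u ∈ I, ∀ d, (toUni v u).coeff d ∈ I) (hJ : v ∉ J.vars)
    {u : MvPolynomial σ K} (hu : u ∈ satBy I J) (d : ℕ) :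
    (toUni v u).coeff d ∈ satBy I J := by
  obtain ⟨k, hk⟩ := hu
  refine ⟨k, ?_⟩
  have hJk : v ∉ (J ^ k).vars := fun h => hJ (vars_pow _ _ h)
  have := hI _ hk d
  rwa [toUni_mul, toUni_eq_C_of_notMem_vars hJk, Polynomial.coeff_C_mul] at this

end coefficients

namespace TriSet

variable {T T' : TriSet K σ} {e : σ × MvPolynomial σ K}

theorem snd_mem_ideal (he : e ∈ T.elems) : e.2 ∈ T.ideal :=
  Ideal.subset_span ⟨e, he, rfl⟩

theorem ideal_le_sat (T : TriSet K σ) : T.ideal ≤ T.sat := le_satBy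

theorem initialWrt_dvd_prodInit (he : e ∈ T.elems) : initialWrt e.1 e.2 ∣ T.prodInit :=
  List.dvd_prod (List.mem_map_of_mem he)

theorem mem_sat_of_pow_mul_mem (he : e ∈ T.elems) {k : ℕ} {f : MvPolynomial σ K}
    (h : initialWrt e.1 e.2 ^ k * f ∈ T.sat) : f ∈ T.sat :=
  mem_satBy_of_pow_mul_mem (initialWrt_dvd_prodInit he) h

theorem sat_eq_bot_of_elems_eq_nil (h : T.elems = []) : T.sat = ⊥ := by
  ext f
  simp [sat, satBy, ideal, prodInit, h]

theorem notMem_vars_prodInit {v : σ} (hv : ∀ e ∈ T.elems, v ∉ (initialWrt e.1 e.2).vars) :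
    v ∉ T.prodInit.vars := by
  have : T.prodInit ∈ supported K {v}ᶜ := by
    refine Subalgebra.list_prod_mem _ fun p hp => ?_
    obtain ⟨e, he, rfl⟩ := List.mem_map.mp hp
    simpa [mem_supported] using hv e he
  simpa [mem_supported] using this

theorem coeff_toUni_mem_ideal {v : σ} (hv : ∀ e ∈ T.elems, v ∉ e.2.vars)
    {f : MvPolynomial σ K} (hf : f ∈ T.ideal) (d : ℕ) : (toUni v f).coeff d ∈ T.ideal :=
  coeff_toUni_mem_span (by rintro _ ⟨e, he, rfl⟩; exact hv e he) hf d

theorem coeff_toUni_mem_sat {v : σ} (hv : ∀ e ∈ T.elems, v ∉ e.2.vars)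
    {f : MvPolynomial σ K} (hf : f ∈ T.sat) (d : ℕ) : (toUni v f).coeff d ∈ T.sat :=
  coeff_toUni_mem_satBy (fun _ => coeff_toUni_mem_ideal hv)
    (notMem_vars_prodInit fun e he h => hv e he (vars_coeffWrt_subset _ _ _ h)) hf d

theorem mem_sat_iff_forall_coeffWrt_mem {v : σ} (hv : ∀ e ∈ T.elems, v ∉ e.2.vars)
    {f : MvPolynomial σ K} : f ∈ T.sat ↔ ∀ d, coeffWrt v d f ∈ T.sat := by
  simp_rw [← coeff_toUni]
  exact ⟨coeff_toUni_mem_sat hv, mem_of_forall_coeff_toUni_mem v⟩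

theorem quotientMk_prodInit_mem_nonZeroDivisors (T : TriSet K σ) :
    Ideal.Quotient.mk T.sat T.prodInit ∈ (MvPolynomial σ K ⧸ T.sat)⁰ :=
  quotientMk_mem_nonZeroDivisors_iff.mpr fun _ hp =>
    mem_satBy_of_pow_mul_mem dvd_rfl (k := 1) (by rwa [pow_one])

theorem take_take (T : TriSet K σ) {i j : ℕ} (hij : i ≤ j) : (T.take j).take i = T.take i := by
  simp [take, List.take_take, min_eq_left hij]

theorem Regular.take (hT : T.Regular) (j : ℕ) : (T.take j).Regular := by
  intro i hi
  have hi' : i < min j T.elems.length := by simpa [TriSet.take] using hi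
  have hij : i < j := lt_min_iff.mp hi' |>.1
  have hiT : i < T.elems.length := lt_min_iff.mp hi' |>.2
  have hget : (T.take j).elems.get ⟨i, hi⟩ = T.elems.get ⟨i, hiT⟩ := List.getElem_take
  rw [hget, take_take T hij.le]
  exact hT i hiT

theorem elems_eq_take_append (T : TriSet K σ) {r : ℕ} (hr : T.elems.length = r + 1) :
    T.elems = (T.take r).elems ++ [T.elems.get ⟨r, by omega⟩] := by
  rw [List.get_eq_getElem]
  conv_lhs => rw [← List.take_length (l := T.elems), hr]
  exact List.take_succ_eq_append_getElem _

section append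

variable (h : T.elems = T'.elems ++ [e])
include h

theorem prodInit_of_elems_eq_append : T.prodInit = T'.prodInit * initialWrt e.1 e.2 := by
  simp [prodInit, h]

theorem ideal_of_elems_eq_append : T.ideal = T'.ideal ⊔ Ideal.span {e.2} := by
  simp only [ideal, ← Ideal.span_union, h, List.mem_append, List.mem_singleton]
  congr 1
  ext p
  simp [or_and_right, exists_or, eq_comm, or_comm]

theorem sat_le_of_elems_eq_append : T'.sat ≤ T.sat :=
  satBy_mono ((ideal_of_elems_eq_append h).symm ▸ le_sup_left)
    ⟨_, prodInit_of_elems_eq_append h⟩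

theorem notMem_vars_of_elems_eq_append : ∀ e' ∈ T'.elems, e.1 ∉ e'.2.vars := by
  intro e' he' hv
  have hlt : e'.1 < e.1 := by
    have hs := T.sorted
    rw [h, List.pairwise_append] at hs
    exact hs.2.2 e' he' e (List.mem_singleton_self e)
  have hle := (T.hlv e' (h ▸ List.mem_append_left _ he')).2 e.1 hv
  exact absurd hle (not_le.mpr hlt)

end append

theorem mem_sat_of_elems_eq_append (h : T.elems = T'.elems ++ [e])
    (hini : initialWrt e.1 e.2 ∉ T'.sat)
    (hreg : ∀ p, initialWrt e.1 e.2 * p ∈ T'.sat → p ∈ T'.sat)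
    {R : MvPolynomial σ K} (hR : R ∈ T.sat) (hdeg : R.degreeOf e.1 < e.2.degreeOf e.1) :
    R ∈ T'.sat := by
  obtain ⟨y, Q⟩ := e
  dsimp only at hini hreg hdeg
  set φ := Ideal.Quotient.mk T'.sat
  obtain ⟨k, hk⟩ := hR
  rw [ideal_of_elems_eq_append h, Submodule.mem_sup] at hk
  obtain ⟨E, hE, _, hB, hEB⟩ := hk
  obtain ⟨B, rfl⟩ := Ideal.mem_span_singleton'.mp hB
  have hc : y ∉ (T.prodInit ^ k).vars := by
    refine fun hv => notMem_vars_prodInit (fun e' he' => ?_) (vars_pow _ _ hv)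
    rcases List.mem_append.mp (h ▸ he') with he' | he'
    · exact fun hv' => notMem_vars_of_elems_eq_append h e' he' (vars_coeffWrt_subset _ _ _ hv')
    · rw [List.mem_singleton.mp he']
      exact notMem_vars_initialWrt _ _
  have hEq : Polynomial.C (T.prodInit ^ k) * toUni y R = toUni y E + toUni y B * toUni y Q := by
    rw [← toUni_eq_C_of_notMem_vars hc, ← toUni_mul, ← hEB, toUni_add, toUni_mul]
  have hE0 : (toUni y E).map φ = 0 := map_quotientMk_eq_zero_iff.mpr fun d =>
    T'.ideal_le_sat (coeff_toUni_mem_ideal (notMem_vars_of_elems_eq_append h) hE d)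
  have hlc : φ (toUni y Q).leadingCoeff ≠ 0 := by
    rwa [leadingCoeff_toUni, Ne, Ideal.Quotient.eq_zero_iff_mem]
  -- in `(K[σ] ⧸ sat T')[y]`, the product `B * Q` has degree below `deg Q`, while the leading
  -- coefficient of `Q` is a non-zero-divisor there
  have hB0 : (toUni y B).map φ = 0 := by
    refine eq_zero_of_natDegree_mul_lt (q := (toUni y Q).map φ) ?_ ?_
    · rw [Polynomial.leadingCoeff_map_of_leadingCoeff_ne_zero _ hlc, leadingCoeff_toUni]
      exact quotientMk_mem_nonZeroDivisors_iff.mpr hreg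
    · rw [← Polynomial.map_mul, eq_sub_of_add_eq' hEq.symm, Polynomial.map_sub, hE0, sub_zero,
        Polynomial.natDegree_map_of_leadingCoeff_ne_zero _ hlc, natDegree_toUni]
      calc _ ≤ (Polynomial.C (T.prodInit ^ k) * toUni y R).natDegree :=
            Polynomial.natDegree_map_le
        _ ≤ (toUni y R).natDegree := Polynomial.natDegree_C_mul_le _ _
        _ < Q.degreeOf y := by rwa [natDegree_toUni]
  have hcreg : φ (T.prodInit ^ k) ∈ (MvPolynomial σ K ⧸ T'.sat)⁰ := by
    rw [prodInit_of_elems_eq_append h, map_pow, map_mul]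
    exact pow_mem (mul_mem T'.quotientMk_prodInit_mem_nonZeroDivisors
      (quotientMk_mem_nonZeroDivisors_iff.mpr hreg)) k
  have hR0 : (toUni y R).map φ = 0 := by
    have := congrArg (Polynomial.map φ) hEq
    rwa [Polynomial.map_add, Polynomial.map_mul, Polynomial.map_mul, hE0, hB0, zero_mul, add_zero,
      Polynomial.map_C, mul_left_mem_nonZeroDivisors_eq_zero_iff
        (Polynomial.mem_nonZeroDivisors_of_leadingCoeff (by rwa [Polynomial.leadingCoeff_C]))]
      at this
  exact mem_of_forall_coeff_toUni_mem y (map_quotientMk_eq_zero_iff.mp hR0)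

theorem mem_sat_iff_exists_isPrem (h : T.elems = T'.elems ++ [e])
    (hini : initialWrt e.1 e.2 ∉ T'.sat)
    (hreg : ∀ p, initialWrt e.1 e.2 * p ∈ T'.sat → p ∈ T'.sat) (f : MvPolynomial σ K) :
    f ∈ T.sat ↔ ∃ S, IsPrem e.1 e.2 f S ∧ S ∈ T'.sat := by
  have he : e ∈ T.elems := h ▸ List.mem_append_right _ (List.mem_singleton_self e)
  have hQ : 0 < e.2.degreeOf e.1 :=
    Nat.pos_of_ne_zero (mem_vars_iff_degreeOf_ne_zero.mp (T.hlv e he).1)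
  have hQT : e.2 ∈ T.sat := T.ideal_le_sat (snd_mem_ideal he)
  constructor
  · intro hf
    obtain ⟨R, A, hEq, hR⟩ := exists_isPrem e.1 hQ f
    refine ⟨R, ⟨A, hEq, hR⟩, mem_sat_of_elems_eq_append h hini hreg ?_ hR⟩
    rw [eq_sub_of_add_eq' hEq.symm]
    exact sub_mem (Ideal.mul_mem_left _ _ hf) (Ideal.mul_mem_left _ _ hQT)
  · rintro ⟨S, ⟨A, hEq, -⟩, hS⟩
    refine mem_sat_of_pow_mul_mem he (hEq ▸ add_mem (Ideal.mul_mem_left _ _ hQT) ?_)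
    exact sat_le_of_elems_eq_append h hS

theorem mem_sat_iff_iterPrem (hT : T.Regular) (f : MvPolynomial σ K) :
    f ∈ T.sat ↔ IterPrem f T.elems.reverse 0 := by
  induction hr : T.elems.length generalizing T f with
  | zero =>
    have h := List.length_eq_zero_iff.mp hr
    simp [h, IterPrem, sat_eq_bot_of_elems_eq_nil h, eq_comm]
  | succ r ih =>
    have h := T.elems_eq_take_append hr
    obtain ⟨hini, hreg⟩ := hT r (by omega)
    generalize T.elems.get ⟨r, _⟩ = e at h hini hreg
    rw [mem_sat_iff_exists_isPrem h hini hreg, h, List.reverse_append, List.reverse_singleton,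
      List.singleton_append, IterPrem]
    refine exists_congr fun S => and_congr_right' (ih (hT.take r) S ?_)
    simp [TriSet.take]
    omega

end TriSet

end CharDec

open CharDec MvPolynomial

theorem stmt_8_general {K : Type*} [Field K] {n : ℕ} (T : TriSet K (Fin n))
    (hreg : T.Regular) (m : Fin n) (hlt : ∀ e ∈ T.elems, e.1 < m)
    (P : MvPolynomial (Fin n) K) :
    IterPrem P T.elems.reverse 0 ↔
      ∀ i ≤ P.degreeOf m, IterPrem (coeffWrt m i P) T.elems.reverse 0 := by
  have hfree : ∀ e ∈ T.elems, m ∉ e.2.vars := fun e he hm =>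
    (hlt e he).not_ge ((T.hlv e he).2 m hm)
  simp_rw [← TriSet.mem_sat_iff_iterPrem hreg]
  rw [TriSet.mem_sat_iff_forall_coeffWrt_mem hfree]
  refine ⟨fun h i _ => h i, fun h i => ?_⟩
  rcases le_or_gt i (P.degreeOf m) with hi | hi
  · exact h i hi
  · rw [coeffWrt_eq_zero_of_degreeOf_lt hi]
    exact zero_mem _

/-- Let `T` be a regular triangular set all of whose leading
variables are smaller than `x_m`, and let `P` have leading variable `x_m` and
coefficients `P_i = coeff of x_m^i` (which lie in `K[x_1,…,x_{m−1}]`). Then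
`prem(P, T) = 0` iff `prem(P_i, T) = 0` for all `i = 0, …, deg(P, x_m)`. -/
theorem stmt_8 {K : Type*} [Field K] {n : ℕ} (T : TriSet K (Fin n))
    (hreg : T.Regular) (m : Fin n) (hlt : ∀ e ∈ T.elems, e.1 < m)
    (P : MvPolynomial (Fin n) K) (hP : HasLV P m) :
    IterPrem P T.elems.reverse 0 ↔
      ∀ i ≤ P.degreeOf m, IterPrem (coeffWrt m i P) T.elems.reverse 0 :=
  stmt_8_general T hreg m hlt P
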